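/- arXiv:1910.08221 — 3 statements merged into one kernel-verified Lean document; each statement's English description precedes it below -/
import Mathlib

section
/- Let P be a real symmetric d×d positive semidefinite matrix, C a d×q real matrix, and θ, σ > 0 such that (θσ²)^{-1} > λ_max(CᵀPC). Then the matrix P̃ = P + PC((θσ²)^{-1}·I_q - CᵀPC)^{-1}CᵀP is symmetric positive semidefinite. -/
open Matrix

theorem stmt_3 {d q : ℕ} (P : Matrix (Fin d) (Fin d) ℝ) (hP : P.PosSemidef)
    (C : Matrix (Fin d) (Fin q) ℝ) (θ σ : ℝ) (hθ : 0 < θ) (hσ : 0 < σ)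
    (hPD : ((θ * σ ^ 2)⁻¹ • (1 : Matrix (Fin q) (Fin q) ℝ) - Cᵀ * P * C).PosDef) :
    (P + P * C * ((θ * σ ^ 2)⁻¹ • (1 : Matrix (Fin q) (Fin q) ℝ) - Cᵀ * P * C)⁻¹ * Cᵀ * P).PosSemidef := by
  have hinv := hPD.inv.posSemidef
  have h2 := hinv.mul_mul_conjTranspose_same (P * C)
  have hPt : P * C = (Cᵀ * P)ᵀ := by
    rw [transpose_mul, transpose_transpose, ← conjTranspose_eq_transpose_of_trivial, hP.isHermitian.eq]
  have : (P * C) * ((θ * σ ^ 2)⁻¹ • (1 : Matrix (Fin q) (Fin q) ℝ) - Cᵀ * P * C)⁻¹ * (P * C)ᴴ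
      = P * C * ((θ * σ ^ 2)⁻¹ • (1 : Matrix (Fin q) (Fin q) ℝ) - Cᵀ * P * C)⁻¹ * Cᵀ * P := by
    rw [conjTranspose_eq_transpose_of_trivial, hPt, transpose_transpose]
    simp only [Matrix.mul_assoc]
  rw [this] at h2
  exact hP.add h2
end

section
/- Let P̃ be a real symmetric d×d positive semidefinite matrix with positive semidefinite square root P̃^{1/2}, G a p×p symmetric positive definite matrix, B a d×p real matrix, and H, A matrices with H symmetric positive semidefinite (d×d) and A a d×d matrix. Then H + Aᵀ·P̃·A - Aᵀ·P̃·B·(G + Bᵀ·P̃·B)^{-1}·Bᵀ·P̃·A = H + Aᵀ·P̃^{1/2}·(I_d + P̃^{1/2}·B·G^{-1}·Bᵀ·P̃^{1/2})^{-1}·P̃^{1/2}·A, and in particular this matrix is positive semidefinite. -/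
open Matrix

theorem stmt_5 {d p : ℕ} (Pt S H A : Matrix (Fin d) (Fin d) ℝ)
    (hPt : Pt.PosSemidef) (hS : S.PosSemidef) (hSP : S * S = Pt)
    (G : Matrix (Fin p) (Fin p) ℝ) (hG : G.PosDef)
    (B : Matrix (Fin d) (Fin p) ℝ) (hH : H.PosSemidef) :
    (H + Aᵀ * Pt * A - Aᵀ * Pt * B * (G + Bᵀ * Pt * B)⁻¹ * Bᵀ * Pt * A =
        H + Aᵀ * S * ((1 : Matrix (Fin d) (Fin d) ℝ) + S * B * G⁻¹ * Bᵀ * S)⁻¹ * S * A) ∧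
    (H + Aᵀ * Pt * A - Aᵀ * Pt * B * (G + Bᵀ * Pt * B)⁻¹ * Bᵀ * Pt * A).PosSemidef := by
  have hSt : Sᵀ = S := by
    rw [← conjTranspose_eq_transpose_of_trivial]; exact hS.isHermitian
  have hBPB : (Bᵀ * Pt * B).PosSemidef := by
    have := hPt.conjTranspose_mul_mul_same B
    rwa [conjTranspose_eq_transpose_of_trivial] at this
  have hK : (G + Bᵀ * Pt * B).PosDef := hG.add_posSemidef hBPB
  have hGinv : (G⁻¹ : Matrix (Fin p) (Fin p) ℝ).PosDef := hG.inv
  have hSBGBS : (S * B * G⁻¹ * (Bᵀ * S)).PosSemidef := by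
    have := hGinv.posSemidef.conjTranspose_mul_mul_same (Bᵀ * S)
    rwa [conjTranspose_eq_transpose_of_trivial, transpose_mul, transpose_transpose, hSt,
      ] at this
  have hM : ((1 : Matrix (Fin d) (Fin d) ℝ) + S * B * G⁻¹ * Bᵀ * S).PosDef := by
    have := Matrix.PosDef.add_posSemidef (Matrix.PosDef.one (n := Fin d) (R := ℝ)) hSBGBS
    rwa [← Matrix.mul_assoc] at this
  -- Woodbury
  have hWood : ((1 : Matrix (Fin d) (Fin d) ℝ) + S * B * G⁻¹ * Bᵀ * S)⁻¹
      = 1 - S * B * (G + Bᵀ * Pt * B)⁻¹ * (Bᵀ * S) := by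
    have h1 : IsUnit (1 : Matrix (Fin d) (Fin d) ℝ) := isUnit_one
    have hGu : IsUnit (G⁻¹ : Matrix (Fin p) (Fin p) ℝ) := hGinv.isUnit
    have hmid : ((G⁻¹)⁻¹ + (Bᵀ * S) * (1 : Matrix (Fin d) (Fin d) ℝ)⁻¹ * (S * B))
        = G + Bᵀ * Pt * B := by
      rw [Matrix.nonsing_inv_nonsing_inv G ((Matrix.isUnit_iff_isUnit_det G).mp hG.isUnit),
        inv_one, Matrix.mul_one, ← hSP]
      simp only [Matrix.mul_assoc]
    have := Matrix.add_mul_mul_inv_eq_sub (1 : Matrix (Fin d) (Fin d) ℝ) (S * B) G⁻¹ (Bᵀ * S)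
      h1 hGu (by rw [hmid]; exact hK.isUnit)
    rw [hmid] at this
    rw [show (1 : Matrix (Fin d) (Fin d) ℝ) + S * B * G⁻¹ * Bᵀ * S
        = 1 + S * B * G⁻¹ * (Bᵀ * S) from by simp only [Matrix.mul_assoc], this, inv_one,
      Matrix.one_mul, Matrix.mul_one]
  have key : Aᵀ * Pt * A - Aᵀ * Pt * B * (G + Bᵀ * Pt * B)⁻¹ * Bᵀ * Pt * A
      = Aᵀ * S * ((1 : Matrix (Fin d) (Fin d) ℝ) + S * B * G⁻¹ * Bᵀ * S)⁻¹ * S * A := by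
    rw [hWood, ← hSP]
    simp only [Matrix.mul_sub, Matrix.sub_mul, Matrix.mul_one, Matrix.one_mul, Matrix.mul_assoc]
  have heq : H + Aᵀ * Pt * A - Aᵀ * Pt * B * (G + Bᵀ * Pt * B)⁻¹ * Bᵀ * Pt * A =
      H + Aᵀ * S * ((1 : Matrix (Fin d) (Fin d) ℝ) + S * B * G⁻¹ * Bᵀ * S)⁻¹ * S * A := by
    rw [add_sub_assoc, key]
  refine ⟨heq, ?_⟩
  rw [heq]
  have hMinv := hM.inv.posSemidef
  have := hMinv.conjTranspose_mul_mul_same (S * A)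
  rw [conjTranspose_eq_transpose_of_trivial, transpose_mul, hSt] at this
  have := hH.add this
  rwa [show H + Aᵀ * S * ((1 : Matrix (Fin d) (Fin d) ℝ) + S * B * G⁻¹ * Bᵀ * S)⁻¹ * (S * A)
      = H + Aᵀ * S * ((1 : Matrix (Fin d) (Fin d) ℝ) + S * B * G⁻¹ * Bᵀ * S)⁻¹ * S * A
    from by simp only [Matrix.mul_assoc]] at this
end

section
/- Let f: ℝ^p × ℝ^q → ℝ be differentiable such that u ↦ exp(θ·f(u,w)) and its u-gradient are dominated appropriately, and define F(u) = (1/θ)·log E_{w∼N(0,σ²I)}[exp(θ·f(u,w))]. Then for any u with F(u) < ∞, ∇F(u) = E_{w∼p(·;u)}[∇_u f(u,w)], where p(w;u) = exp(θ·f(u,w) - ‖w‖²/(2σ²) - θ·F(u)) is a probability density. -/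
/-!
Differentiating under the integral sign (dominated convergence) gives
`∇ Z(x) = ∫ e^{φ(x,a)} ∇ₓφ(x,a) dμ(a)` for the partition function `Z(x) = ∫ e^{φ(x,a)} dμ(a)`,
and the chain rule for `log` divides this by `Z(x)`, which is exactly integration of `∇ₓφ`
against the tilted measure `μ.tilted φ(x, ·)`. The risk-sensitive cost is this log-partition
function for `φ = θ f`, scaled by `1/θ`.
-/

open MeasureTheory InnerProductSpace Real Topology

section Gradient

variable {F : Type*} [NormedAddCommGroup F] [InnerProductSpace ℝ F] [CompleteSpace F]

theorem HasDerivAt.comp_hasGradientAt {h : ℝ → ℝ} {h' : ℝ} {f : F → ℝ} {f' x : F}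
    (hh : HasDerivAt h h' (f x)) (hf : HasGradientAt f f' x) :
    HasGradientAt (fun y ↦ h (f y)) (h' • f') x := by
  rw [hasGradientAt_iff_hasFDerivAt, map_smulₛₗ, starRingEnd_apply, star_trivial]
  exact hh.comp_hasFDerivAt x hf.hasFDerivAt

theorem HasGradientAt.const_mul {f : F → ℝ} {f' x : F} (c : ℝ) (hf : HasGradientAt f f' x) :
    HasGradientAt (fun y ↦ c * f y) (c • f') x := by
  simpa using ((hasDerivAt_id (f x)).const_mul c).comp_hasGradientAt hf

variable {α : Type*} [MeasurableSpace α] {μ : Measure α}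

theorem hasGradientAt_integral_of_dominated_of_gradient_le {s : Set F} {x₀ : F}
    {φ : F → α → ℝ} {ψ : F → α → F} {bound : α → ℝ} (hs : s ∈ 𝓝 x₀)
    (hφ_meas : ∀ᶠ x in 𝓝 x₀, AEStronglyMeasurable (φ x) μ) (hφ_int : Integrable (φ x₀) μ)
    (hψ_meas : AEStronglyMeasurable (ψ x₀) μ)
    (h_bound : ∀ᵐ a ∂μ, ∀ x ∈ s, ‖ψ x a‖ ≤ bound a)
    (bound_integrable : Integrable bound μ)
    (h_diff : ∀ᵐ a ∂μ, ∀ x ∈ s, HasGradientAt (φ · a) (ψ x a) x) :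
    HasGradientAt (fun x ↦ ∫ a, φ x a ∂μ) (∫ a, ψ x₀ a ∂μ) x₀ := by
  let L := (toDual ℝ F).toLinearIsometry.toContinuousLinearMap
  have hψ_int : Integrable (ψ x₀) μ :=
    bound_integrable.mono' hψ_meas (h_bound.mono fun a ha ↦ ha x₀ (mem_of_mem_nhds hs))
  have h_comm : ∫ a, L (ψ x₀ a) ∂μ = toDual ℝ F (∫ a, ψ x₀ a ∂μ) :=
    L.integral_comp_commSL (by simp) hψ_int
  rw [hasGradientAt_iff_hasFDerivAt, ← h_comm]
  refine hasFDerivAt_integral_of_dominated_of_fderiv_le hs hφ_meas hφ_int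
    (L.continuous.comp_aestronglyMeasurable hψ_meas) ?_ bound_integrable
    (h_diff.mono fun a ha x hx ↦ (ha x hx).hasFDerivAt)
  filter_upwards [h_bound] with a ha x hx
  simpa [L] using ha x hx

theorem hasGradientAt_log_integral_exp [NeZero μ] {s : Set F} {x₀ : F}
    {φ : F → α → ℝ} {ψ : F → α → F} {bound : α → ℝ} (hs : s ∈ 𝓝 x₀)
    (h_int : ∀ᶠ x in 𝓝 x₀, Integrable (fun a ↦ exp (φ x a)) μ)
    (h_meas : AEStronglyMeasurable (fun a ↦ exp (φ x₀ a) • ψ x₀ a) μ)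
    (h_bound : ∀ᵐ a ∂μ, ∀ x ∈ s, ‖exp (φ x a) • ψ x a‖ ≤ bound a)
    (bound_integrable : Integrable bound μ)
    (h_diff : ∀ᵐ a ∂μ, ∀ x ∈ s, HasGradientAt (φ · a) (ψ x a) x) :
    HasGradientAt (fun x ↦ log (∫ a, exp (φ x a) ∂μ)) (∫ a, ψ x₀ a ∂(μ.tilted (φ x₀))) x₀ := by
  have h_partition : HasGradientAt (fun x ↦ ∫ a, exp (φ x a) ∂μ)
      (∫ a, exp (φ x₀ a) • ψ x₀ a ∂μ) x₀ :=
    hasGradientAt_integral_of_dominated_of_gradient_le hs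
      (h_int.mono fun _ h ↦ h.aestronglyMeasurable) h_int.self_of_nhds h_meas h_bound
      bound_integrable
      (h_diff.mono fun a ha x hx ↦
        (hasDerivAt_exp (φ x a)).comp_hasGradientAt (f := (φ · a)) (ha x hx))
  have h_pos : 0 < ∫ a, exp (φ x₀ a) ∂μ := integral_exp_pos h_int.self_of_nhds
  convert (hasDerivAt_log h_pos.ne').comp_hasGradientAt (f := fun x ↦ ∫ a, exp (φ x a) ∂μ)
    h_partition using 1
  simp_rw [integral_tilted, div_eq_inv_mul, ← smul_smul, integral_smul]

end Gradient

open ProbabilityTheory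

theorem stmt_7_general {p q : ℕ} (θ σ : ℝ) (hθ : 0 < θ)
    (f : EuclideanSpace ℝ (Fin p) → (Fin q → ℝ) → ℝ)
    (g : EuclideanSpace ℝ (Fin p) → (Fin q → ℝ) → EuclideanSpace ℝ (Fin p))
    (μ : Measure (Fin q → ℝ))
    (hμ : μ = Measure.pi fun _ : Fin q => gaussianReal 0 ⟨σ ^ 2, sq_nonneg σ⟩)
    (hf_int : ∀ u, Integrable (fun w => Real.exp (θ * f u w)) μ)
    (hgrad : ∀ w u, HasGradientAt (fun x => f x w) (g u w) u)
    (u : EuclideanSpace ℝ (Fin p)) (ε : ℝ) (hε : 0 < ε)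
    (C : (Fin q → ℝ) → ℝ) (hC : Integrable C μ)
    (hbound : ∀ u' ∈ Metric.ball u ε, ∀ w, ‖Real.exp (θ * f u' w) • g u' w‖ ≤ C w)
    (hmeas : AEStronglyMeasurable (fun w => Real.exp (θ * f u w) • g u w) μ) :
    HasGradientAt (fun u' => (1 / θ) * Real.log (∫ w, Real.exp (θ * f u' w) ∂μ))
      (∫ w, Real.exp (θ * f u w -
          θ * ((1 / θ) * Real.log (∫ w', Real.exp (θ * f u w') ∂μ))) • g u w ∂μ) u := by
  -- instance search does not fire on the anonymous-constructor variance `⟨σ ^ 2, _⟩ : ℝ≥0`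
  have : IsProbabilityMeasure μ := hμ ▸ @Measure.pi.instIsProbabilityMeasure _ _ _ _ _
    fun _ ↦ instIsProbabilityMeasureGaussianReal _ _
  have h_cgf := hasGradientAt_log_integral_exp (ψ := fun x w ↦ θ • g x w)
    (bound := fun w ↦ θ * C w) (Metric.ball_mem_nhds u hε) (.of_forall hf_int)
    ((hmeas.const_smul θ).congr (.of_forall fun _ ↦ smul_comm θ _ _))
    (.of_forall fun w x hx ↦ by
      rw [smul_comm, norm_smul, norm_of_nonneg hθ.le]
      exact mul_le_mul_of_nonneg_left (hbound x hx w) hθ.le)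
    (hC.const_mul θ) (.of_forall fun w x _ ↦ (hgrad w x).const_mul θ)
  convert h_cgf.const_mul (1 / θ) using 1
  have h_log : θ * (1 / θ * log (∫ w, exp (θ * f u w) ∂μ)) = log (∫ w, exp (θ * f u w) ∂μ) :=
    by field_simp
  rw [integral_smul, smul_smul, one_div_mul_cancel hθ.ne', one_smul, integral_tilted, h_log]
  simp_rw [exp_sub, exp_log (integral_exp_pos (hf_int u))]

theorem stmt_7 {p q : ℕ} (θ σ : ℝ) (hθ : 0 < θ) (hσ : 0 < σ)
    (f : EuclideanSpace ℝ (Fin p) → (Fin q → ℝ) → ℝ)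
    (g : EuclideanSpace ℝ (Fin p) → (Fin q → ℝ) → EuclideanSpace ℝ (Fin p))
    (μ : Measure (Fin q → ℝ))
    (hμ : μ = Measure.pi fun _ : Fin q => gaussianReal 0 ⟨σ ^ 2, sq_nonneg σ⟩)
    (hf_int : ∀ u, Integrable (fun w => Real.exp (θ * f u w)) μ)
    (hgrad : ∀ w u, HasGradientAt (fun x => f x w) (g u w) u)
    (u : EuclideanSpace ℝ (Fin p)) (ε : ℝ) (hε : 0 < ε)
    (C : (Fin q → ℝ) → ℝ) (hC : Integrable C μ)
    (hbound : ∀ u' ∈ Metric.ball u ε, ∀ w, ‖Real.exp (θ * f u' w) • g u' w‖ ≤ C w)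
    (hmeas : AEStronglyMeasurable (fun w => Real.exp (θ * f u w) • g u w) μ) :
    HasGradientAt (fun u' => (1 / θ) * Real.log (∫ w, Real.exp (θ * f u' w) ∂μ))
      (∫ w, Real.exp (θ * f u w -
          θ * ((1 / θ) * Real.log (∫ w', Real.exp (θ * f u w') ∂μ))) • g u w ∂μ) u :=
  stmt_7_general θ σ hθ f g μ hμ hf_int hgrad u ε hε C hC hbound hmeas
end
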